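/- arXiv:2009.11259 — 2 statements merged into one kernel-verified Lean document; each statement's English description precedes it below -/
import Mathlib

section
/- Let r(y) := 1 + (1/4)(cos(2πy₁) − 2 sin(2πy₁)) sin(2πy₂), let A(y) be the 2×2 diagonal matrix with entries a₁₁(y) = (1 − (1/2) sin(2πy₁) sin(2πy₂))/r(y), a₂₂(y) = (1 + (1/2) sin(2πy₁) sin(2πy₂))/r(y), a₁₂ = a₂₁ = 0, and let v¹¹(y) := −(sin(2πy₂)/(32π²)) cos(2πy₁), v²²(y) := −(sin(2πy₂)/(32π²)) (cos(2πy₁) − 4 sin(2πy₁)), v¹² = v²¹ := 0. For j,k,l ∈ {1,2} define c_j^{kl} := ∫_Y (A(y)e_j) · ∇v^{kl}(y) r(y) dy, where e_j is the j-th standard basis vector and Y = [0,1]². Then c₁¹¹ = c₁²² = −1/(128π), and c_j^{kl} = 0 for every other triple (j,k,l) ∈ {1,2}³. In particular A is a c-bad matrix (some c_j^{kl} ≠ 0). -/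
/-- Partial derivative w.r.t. the first variable. -/
noncomputable def p1 (f : ℝ → ℝ → ℝ) : ℝ → ℝ → ℝ := fun x y => deriv (fun t => f t y) x

/-- Partial derivative w.r.t. the second variable. -/
noncomputable def p2 (f : ℝ → ℝ → ℝ) : ℝ → ℝ → ℝ := fun x y => deriv (fun t => f x t) y

/-- The invariant measure `r`. -/
noncomputable def rr (y₁ y₂ : ℝ) : ℝ :=
  1 + (1/4) * (Real.cos (2 * Real.pi * y₁) - 2 * Real.sin (2 * Real.pi * y₁))
    * Real.sin (2 * Real.pi * y₂)

/-- Entry `a₁₁` of the `c`-bad matrix `A`. -/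
noncomputable def a11 (y₁ y₂ : ℝ) : ℝ :=
  (1 - (1/2) * Real.sin (2 * Real.pi * y₁) * Real.sin (2 * Real.pi * y₂)) / rr y₁ y₂

/-- Entry `a₂₂` of the `c`-bad matrix `A`. -/
noncomputable def a22 (y₁ y₂ : ℝ) : ℝ :=
  (1 + (1/2) * Real.sin (2 * Real.pi * y₁) * Real.sin (2 * Real.pi * y₂)) / rr y₁ y₂

/-- The diagonal entries `a_{jj}` of `A`. -/
noncomputable def adiag : Fin 2 → ℝ → ℝ → ℝ
  | 0 => a11
  | 1 => a22

/-- The `j`-th partial derivative operator. -/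
noncomputable def pdd : Fin 2 → (ℝ → ℝ → ℝ) → ℝ → ℝ → ℝ
  | 0 => p1
  | 1 => p2

/-- The matrix `V = (v^{kl})` of corrector functions. -/
noncomputable def vv : Fin 2 → Fin 2 → ℝ → ℝ → ℝ
  | 0, 0 => fun y₁ y₂ =>
      -(Real.sin (2 * Real.pi * y₂) / (32 * Real.pi ^ 2)) * Real.cos (2 * Real.pi * y₁)
  | 1, 1 => fun y₁ y₂ =>
      -(Real.sin (2 * Real.pi * y₂) / (32 * Real.pi ^ 2))
        * (Real.cos (2 * Real.pi * y₁) - 4 * Real.sin (2 * Real.pi * y₁))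
  | _, _ => fun _ _ => 0

/-- The constants `c_j^{kl} = ∫_Y (A e_j)·∇v^{kl} r`; since `A` is diagonal the integrand is
`a_{jj} ∂_j v^{kl} r`. -/
noncomputable def cc (j k l : Fin 2) : ℝ :=
  ∫ y₁ in (0:ℝ)..1, ∫ y₂ in (0:ℝ)..1,
    adiag j y₁ y₂ * pdd j (vv k l) y₁ y₂ * rr y₁ y₂

/-!
Multiplying by the weight `r` cancels the denominators of `A`, so every integrand is a
trigonometric polynomial of degree two in `y₂`. Both nonzero correctors have the separated form
`v^{kk}(y) = -(sin 2πy₂ / 32π²) φ_k(y₁)`. For `j = 2` the integrand involves only `cos 2πy₂` and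
`sin 2πy₂ cos 2πy₂`, which have mean zero over a period; for `j = 1` integrating out `y₂` leaves
`c₁^{kk} = (128π²)⁻¹ ∫ sin(2πy₁) φ_k'(y₁) dy₁`, and `φ₁ = cos 2π·`, `φ₂ = cos 2π· - 4 sin 2π·`
both give `-1/(128π)`.
-/

open Real

lemma integral_comp_two_pi_mul (f : ℝ → ℝ) :
    ∫ x in (0:ℝ)..1, f (2 * π * x) = (2 * π)⁻¹ * ∫ x in (0:ℝ)..2 * π, f x := by
  simp [intervalIntegral.integral_comp_mul_left f two_pi_pos.ne']

lemma integral_sin_two_pi_mul : ∫ x in (0:ℝ)..1, sin (2 * π * x) = 0 := by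
  simp [integral_comp_two_pi_mul sin, integral_sin]

lemma integral_cos_two_pi_mul : ∫ x in (0:ℝ)..1, cos (2 * π * x) = 0 := by
  simp [integral_comp_two_pi_mul cos, integral_cos]

lemma integral_sin_two_pi_mul_sq : ∫ x in (0:ℝ)..1, sin (2 * π * x) ^ 2 = 1 / 2 := by
  rw [integral_comp_two_pi_mul (sin · ^ 2), integral_sin_sq, sin_zero, sin_two_pi]
  field_simp
  ring

lemma integral_sin_two_pi_mul_mul_cos :
    ∫ x in (0:ℝ)..1, sin (2 * π * x) * cos (2 * π * x) = 0 := by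
  simp [integral_comp_two_pi_mul (fun x => sin x * cos x), integral_sin_mul_cos₁]

lemma integral_eq_of_eq_trig_poly {f : ℝ → ℝ} (a b c d e : ℝ)
    (hf : ∀ x, f x = a + b * sin (2 * π * x) + c * sin (2 * π * x) ^ 2
      + d * cos (2 * π * x) + e * (sin (2 * π * x) * cos (2 * π * x))) :
    ∫ x in (0:ℝ)..1, f x = a + c / 2 := by
  have integrable (g : ℝ → ℝ) (hg : Continuous g) : IntervalIntegrable g MeasureTheory.volume 0 1 :=
    hg.intervalIntegrable 0 1
  simp only [hf]
  rw [intervalIntegral.integral_add (integrable _ (by fun_prop)) (integrable _ (by fun_prop)),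
    intervalIntegral.integral_add (integrable _ (by fun_prop)) (integrable _ (by fun_prop)),
    intervalIntegral.integral_add (integrable _ (by fun_prop)) (integrable _ (by fun_prop)),
    intervalIntegral.integral_add (integrable _ (by fun_prop)) (integrable _ (by fun_prop))]
  simp only [intervalIntegral.integral_const_mul, integral_sin_two_pi_mul, integral_cos_two_pi_mul,
    integral_sin_two_pi_mul_sq, integral_sin_two_pi_mul_mul_cos, intervalIntegral.integral_const]
  norm_num
  ring

lemma hasDerivAt_sin_two_pi_mul (x : ℝ) :
    HasDerivAt (fun t => sin (2 * π * t)) (2 * π * cos (2 * π * x)) x := by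
  simpa [mul_comm] using ((hasDerivAt_id x).const_mul (2 * π)).sin

lemma hasDerivAt_cos_two_pi_mul (x : ℝ) :
    HasDerivAt (fun t => cos (2 * π * t)) (-(2 * π * sin (2 * π * x))) x := by
  simpa [mul_comm] using ((hasDerivAt_id x).const_mul (2 * π)).cos

lemma rr_pos (y₁ y₂ : ℝ) : 0 < rr y₁ y₂ := by
  have hp : |cos (2 * π * y₁) - 2 * sin (2 * π * y₁)| ≤ 3 := by
    have := abs_sub (cos (2 * π * y₁)) (2 * sin (2 * π * y₁))
    rw [abs_mul, abs_two] at this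
    linarith [abs_cos_le_one (2 * π * y₁), abs_sin_le_one (2 * π * y₁)]
  have hpq : |(cos (2 * π * y₁) - 2 * sin (2 * π * y₁)) * sin (2 * π * y₂)| ≤ 3 := by
    rw [abs_mul]
    nlinarith [abs_sin_le_one (2 * π * y₂), abs_nonneg (sin (2 * π * y₂))]
  have := neg_abs_le ((cos (2 * π * y₁) - 2 * sin (2 * π * y₁)) * sin (2 * π * y₂))
  rw [rr]
  linarith

lemma a11_mul_rr (y₁ y₂ : ℝ) :
    a11 y₁ y₂ * rr y₁ y₂ = 1 - 1 / 2 * sin (2 * π * y₁) * sin (2 * π * y₂) :=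
  div_mul_cancel₀ _ (rr_pos y₁ y₂).ne'

lemma a22_mul_rr (y₁ y₂ : ℝ) :
    a22 y₁ y₂ * rr y₁ y₂ = 1 + 1 / 2 * sin (2 * π * y₁) * sin (2 * π * y₂) :=
  div_mul_cancel₀ _ (rr_pos y₁ y₂).ne'

noncomputable def corrector (φ : ℝ → ℝ) (y₁ y₂ : ℝ) : ℝ := -(sin (2 * π * y₂) / (32 * π ^ 2)) * φ y₁

lemma vv_zero_zero : vv 0 0 = corrector (fun t => cos (2 * π * t)) := rfl

lemma vv_one_one : vv 1 1 = corrector (fun t => cos (2 * π * t) - 4 * sin (2 * π * t)) := rfl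

lemma p1_corrector (φ : ℝ → ℝ) (y₁ y₂ : ℝ) :
    p1 (corrector φ) y₁ y₂ = -(sin (2 * π * y₂) / (32 * π ^ 2)) * deriv φ y₁ := by
  simp only [p1, corrector, deriv_const_mul_field']

lemma p2_corrector (φ : ℝ → ℝ) (y₁ y₂ : ℝ) :
    p2 (corrector φ) y₁ y₂ = -(cos (2 * π * y₂) / (16 * π)) * φ y₁ := by
  simp only [p2, corrector]
  rw [(((hasDerivAt_sin_two_pi_mul y₂).div_const _).fun_neg.mul_const (φ y₁)).deriv]
  field_simp [pi_ne_zero]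
  ring

lemma cc_zero_of_eq_corrector {k l : Fin 2} {φ : ℝ → ℝ} (h : vv k l = corrector φ) :
    cc 0 k l = (128 * π ^ 2)⁻¹ * ∫ y in (0:ℝ)..1, sin (2 * π * y) * deriv φ y := by
  have inner (y₁ : ℝ) : ∫ y₂ in (0:ℝ)..1, adiag 0 y₁ y₂ * pdd 0 (vv k l) y₁ y₂ * rr y₁ y₂
      = (128 * π ^ 2)⁻¹ * (sin (2 * π * y₁) * deriv φ y₁) := by
    refine (integral_eq_of_eq_trig_poly 0 (-(deriv φ y₁ / (32 * π ^ 2)))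
      (sin (2 * π * y₁) * deriv φ y₁ / (64 * π ^ 2)) 0 0 fun y₂ => ?_).trans (by ring)
    rw [adiag, pdd, h, mul_right_comm, a11_mul_rr, p1_corrector]
    ring
  rw [cc, intervalIntegral.integral_congr fun y₁ _ => inner y₁, intervalIntegral.integral_const_mul]

lemma cc_one_of_eq_corrector {k l : Fin 2} {φ : ℝ → ℝ} (h : vv k l = corrector φ) :
    cc 1 k l = 0 := by
  have inner (y₁ : ℝ) : ∫ y₂ in (0:ℝ)..1, adiag 1 y₁ y₂ * pdd 1 (vv k l) y₁ y₂ * rr y₁ y₂ = 0 := by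
    refine (integral_eq_of_eq_trig_poly 0 0 0 (-(φ y₁ / (16 * π)))
      (-(sin (2 * π * y₁) * φ y₁ / (32 * π))) fun y₂ => ?_).trans (by ring)
    rw [adiag, pdd, h, mul_right_comm, a22_mul_rr, p2_corrector]
    ring
  simp only [cc, inner, intervalIntegral.integral_zero]

lemma cc_of_ne {j k l : Fin 2} (h : k ≠ l) : cc j k l = 0 := by
  have hv : vv k l = fun _ _ => 0 := by
    fin_cases k <;> fin_cases l <;> first | rfl | exact absurd rfl h
  have hp (y₁ y₂ : ℝ) : pdd j (vv k l) y₁ y₂ = 0 := by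
    fin_cases j <;> simp [pdd, p1, p2, hv]
  simp [cc, hp]

lemma cc_zero_zero_zero : cc 0 0 0 = -1 / (128 * π) := by
  rw [cc_zero_of_eq_corrector vv_zero_zero, integral_eq_of_eq_trig_poly 0 0 (-(2 * π)) 0 0
    fun y => by rw [(hasDerivAt_cos_two_pi_mul y).deriv]; ring]
  field_simp [pi_ne_zero]
  ring

lemma cc_zero_one_one : cc 0 1 1 = -1 / (128 * π) := by
  rw [cc_zero_of_eq_corrector vv_one_one, integral_eq_of_eq_trig_poly 0 0 (-(2 * π)) 0 (-(8 * π))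
    fun y => by
      rw [((hasDerivAt_cos_two_pi_mul y).fun_sub ((hasDerivAt_sin_two_pi_mul y).const_mul 4)).deriv]
      ring]
  field_simp [pi_ne_zero]
  ring

/-- `c₁¹¹ = c₁²² = −1/(128π)`, all other `c_j^{kl}` vanish; in particular `A` is `c`-bad. -/
theorem explicit_c_bad_matrix :
    cc 0 0 0 = -1 / (128 * Real.pi) ∧
    cc 0 1 1 = -1 / (128 * Real.pi) ∧
    (∀ j k l : Fin 2, ¬(j = 0 ∧ k = l) → cc j k l = 0) ∧
    (∃ j k l : Fin 2, cc j k l ≠ 0) := by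
  refine ⟨cc_zero_zero_zero, cc_zero_one_one, fun j k l hjkl => ?_, 0, 0, 0, ?_⟩
  · by_cases hkl : k = l
    · subst hkl
      obtain rfl : j = 1 := by fin_cases j <;> simp_all
      fin_cases k
      exacts [cc_one_of_eq_corrector vv_zero_zero, cc_one_of_eq_corrector vv_one_one]
    · exact cc_of_ne hkl
  · rw [cc_zero_zero_zero]
    exact (div_neg_of_neg_of_pos (by norm_num) (by positivity)).ne
end

section
/- Let n ≥ 1, Ω ⊆ ℝⁿ open, ε > 0. Let A : ℝⁿ → ℝ^{n×n} have symmetric values with entries a_{ij}, and let Ā ∈ ℝ^{n×n} be a constant symmetric matrix with entries ā_{ij}. Suppose: f : Ω → ℝ; uᵋ : Ω → ℝ is twice differentiable with −A(x/ε):D²uᵋ(x) = f(x) on Ω; u : Ω → ℝ is four times continuously differentiable with −Ā:D²u = f on Ω; for each k,l, v^{kl} : ℝⁿ → ℝ is twice continuously differentiable with −A(y):D²v^{kl}(y) = a_{kl}(y) − ā_{kl} for all y ∈ ℝⁿ; θᵋ : Ω → ℝ is twice differentiable with A(x/ε):D²θᵋ(x) = 0 on Ω; and wᵋ : Ω → ℝ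 is twice differentiable with −A(x/ε):D²wᵋ(x) = ∑_{i,j,k,l=1}^{n} a_{ij}(x/ε) ∂_i v^{kl}(x/ε) ∂³_{jkl}u(x) on Ω. Define φᵋ(x) := ε² ( ∑_{k,l=1}^{n} v^{kl}(x/ε) ∂²_{kl}u(x) + θᵋ(x) ). Then for every x ∈ Ω: −A(x/ε):D²(uᵋ − u − φᵋ − 2εwᵋ)(x) = ε² ∑_{i,j,k,l=1}^{n} a_{ij}(x/ε) v^{kl}(x/ε) ∂⁴_{ijkl}u(x). -/
/-- The partial derivative `∂_i f` of `f : ℝⁿ → ℝ`, as the Fréchet derivative applied to the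
`i`-th standard basis vector. -/
noncomputable def pd {n : ℕ} (i : Fin n) (f : (Fin n → ℝ) → ℝ) : (Fin n → ℝ) → ℝ :=
  fun x => fderiv ℝ f x (Pi.single i 1)

/-- `f` is twice differentiable on `Ω`: it is differentiable on `Ω` and so are all its first
partial derivatives. -/
def TwiceDiffOn {n : ℕ} (f : (Fin n → ℝ) → ℝ) (Ω : Set (Fin n → ℝ)) : Prop :=
  DifferentiableOn ℝ f Ω ∧ ∀ i : Fin n, DifferentiableOn ℝ (pd i f) Ω


/-! Expand `D²` of the two-scale corrector `v^{kl}(x/ε) ∂²_{kl}u(x)` by the product and chain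
rules. Its `ε⁻²` part is, by the cell problem, `(Ā - A)(x/ε):D²u`, which turns `A(x/ε):D²u`
into `Ā:D²u` and so cancels against `uᵋ`; its two `ε⁻¹` cross terms coincide by symmetry of
`A` and are cancelled by `2εwᵋ`; `θᵋ` is `A(·/ε)`-harmonic. What survives is the `ε²` term
with the fourth derivatives of `u`. -/

open Filter Topology

section PartialDerivatives

variable {n : ℕ} {f g : (Fin n → ℝ) → ℝ} {x : Fin n → ℝ}

lemma pd_congr (h : f =ᶠ[𝓝 x] g) (j : Fin n) : pd j f x = pd j g x := by
  unfold pd; rw [h.fderiv_eq]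

lemma pd_add (hf : DifferentiableAt ℝ f x) (hg : DifferentiableAt ℝ g x) (j : Fin n) :
    pd j (fun y => f y + g y) x = pd j f x + pd j g x := by
  unfold pd; rw [fderiv_fun_add hf hg]; rfl

lemma pd_sub (hf : DifferentiableAt ℝ f x) (hg : DifferentiableAt ℝ g x) (j : Fin n) :
    pd j (fun y => f y - g y) x = pd j f x - pd j g x := by
  unfold pd; rw [fderiv_fun_sub hf hg]; rfl

lemma pd_const_mul (hf : DifferentiableAt ℝ f x) (c : ℝ) (j : Fin n) :
    pd j (fun y => c * f y) x = c * pd j f x := by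
  unfold pd; rw [fderiv_const_mul hf c]; rfl

lemma pd_mul (hf : DifferentiableAt ℝ f x) (hg : DifferentiableAt ℝ g x) (j : Fin n) :
    pd j (fun y => f y * g y) x = pd j f x * g x + f x * pd j g x := by
  unfold pd; rw [fderiv_fun_mul hf hg]
  simp only [add_apply, FunLike.coe_smul, Pi.smul_apply, smul_eq_mul]
  ring

lemma pd_sum {ι : Type*} (s : Finset ι) {F : ι → (Fin n → ℝ) → ℝ}
    (h : ∀ k ∈ s, DifferentiableAt ℝ (F k) x) (j : Fin n) :
    pd j (fun y => ∑ k ∈ s, F k y) x = ∑ k ∈ s, pd j (F k) x := by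
  unfold pd; rw [fderiv_fun_sum h]; simp

lemma pd_comp_smul {c : ℝ} (hf : DifferentiableAt ℝ f (c • x)) (j : Fin n) :
    pd j (fun y => f (c • y)) x = c * pd j f (c • x) := by
  have hL : HasFDerivAt (fun y : Fin n → ℝ => c • y) (c • ContinuousLinearMap.id ℝ _) x :=
    (c • ContinuousLinearMap.id ℝ (Fin n → ℝ)).hasFDerivAt
  have hcomp : HasFDerivAt (fun y => f (c • y))
      ((fderiv ℝ f (c • x)).comp (c • ContinuousLinearMap.id ℝ _)) x :=
    hf.hasFDerivAt.comp x hL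
  unfold pd
  rw [hcomp.fderiv]
  simp

lemma eventually_comp_smul {c : ℝ} {p : (Fin n → ℝ) → Prop} (h : ∀ᶠ y in 𝓝 (c • x), p y) :
    ∀ᶠ y in 𝓝 x, p (c • y) :=
  ((continuous_const_smul c).tendsto x).eventually h

lemma DifferentiableAt.comp_smul {c : ℝ} (hf : DifferentiableAt ℝ f (c • x)) :
    DifferentiableAt ℝ (fun y => f (c • y)) x :=
  hf.comp x (differentiableAt_id.const_smul c)

lemma contDiffAt_pd {m k : WithTop ℕ∞} (hmk : m + 1 ≤ k) (hf : ContDiffAt ℝ k f x) (j : Fin n) :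
    ContDiffAt ℝ m (pd j f) x :=
  (hf.fderiv_right hmk).clm_apply contDiffAt_const

end PartialDerivatives

def TwiceDiffAt {n : ℕ} (f : (Fin n → ℝ) → ℝ) (x : Fin n → ℝ) : Prop :=
  (∀ᶠ y in 𝓝 x, DifferentiableAt ℝ f y) ∧ ∀ j : Fin n, DifferentiableAt ℝ (pd j f) x

namespace TwiceDiffAt

variable {n : ℕ} {f g : (Fin n → ℝ) → ℝ} {x : Fin n → ℝ}

lemma _root_.TwiceDiffOn.twiceDiffAt {Ω : Set (Fin n → ℝ)} (hf : TwiceDiffOn f Ω)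
    (hΩ : IsOpen Ω) (hx : x ∈ Ω) : TwiceDiffAt f x :=
  ⟨eventually_of_mem (hΩ.mem_nhds hx) fun y hy => (hf.1 y hy).differentiableAt
    (hΩ.mem_nhds hy), fun j => (hf.2 j x hx).differentiableAt (hΩ.mem_nhds hx)⟩

lemma _root_.ContDiffAt.twiceDiffAt (hf : ContDiffAt ℝ 2 f x) : TwiceDiffAt f x :=
  ⟨(hf.eventually (by simp)).mono fun _ hy => hy.differentiableAt (by simp),
    fun j => (contDiffAt_pd (m := 1) (by norm_num) hf j).differentiableAt (by simp)⟩

lemma differentiableAt (hf : TwiceDiffAt f x) : DifferentiableAt ℝ f x :=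
  hf.1.self_of_nhds

lemma add (hf : TwiceDiffAt f x) (hg : TwiceDiffAt g x) :
    TwiceDiffAt (fun y => f y + g y) x :=
  ⟨(hf.1.and hg.1).mono fun _ h => h.1.add h.2, fun j =>
    ((hf.2 j).add (hg.2 j)).congr_of_eventuallyEq
      ((hf.1.and hg.1).mono fun _ h => pd_add h.1 h.2 j)⟩

lemma sub (hf : TwiceDiffAt f x) (hg : TwiceDiffAt g x) :
    TwiceDiffAt (fun y => f y - g y) x :=
  ⟨(hf.1.and hg.1).mono fun _ h => h.1.sub h.2, fun j =>
    ((hf.2 j).sub (hg.2 j)).congr_of_eventuallyEq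
      ((hf.1.and hg.1).mono fun _ h => pd_sub h.1 h.2 j)⟩

lemma const_mul (hf : TwiceDiffAt f x) (c : ℝ) : TwiceDiffAt (fun y => c * f y) x :=
  ⟨hf.1.mono fun _ h => h.const_mul c, fun j =>
    ((hf.2 j).const_mul c).congr_of_eventuallyEq (hf.1.mono fun _ h => pd_const_mul h c j)⟩

lemma mul (hf : TwiceDiffAt f x) (hg : TwiceDiffAt g x) :
    TwiceDiffAt (fun y => f y * g y) x :=
  ⟨(hf.1.and hg.1).mono fun _ h => h.1.mul h.2, fun j =>
    (((hf.2 j).mul hg.differentiableAt).add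
      (hf.differentiableAt.mul (hg.2 j))).congr_of_eventuallyEq
        ((hf.1.and hg.1).mono fun _ h => pd_mul h.1 h.2 j)⟩

lemma sum {ι : Type*} (s : Finset ι) {F : ι → (Fin n → ℝ) → ℝ}
    (hF : ∀ k ∈ s, TwiceDiffAt (F k) x) : TwiceDiffAt (fun y => ∑ k ∈ s, F k y) x := by
  have hev : ∀ᶠ y in 𝓝 x, ∀ k ∈ s, DifferentiableAt ℝ (F k) y :=
    (eventually_all_finset s).2 fun k hk => (hF k hk).1
  exact ⟨hev.mono fun _ h => DifferentiableAt.fun_sum h, fun j =>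
    (DifferentiableAt.fun_sum fun k hk => (hF k hk).2 j).congr_of_eventuallyEq
      (hev.mono fun _ h => pd_sum s h j)⟩

lemma pd_comp_smul_eventuallyEq {c : ℝ} (hf : TwiceDiffAt f (c • x)) (j : Fin n) :
    pd j (fun y => f (c • y)) =ᶠ[𝓝 x] fun y => c * pd j f (c • y) :=
  (eventually_comp_smul hf.1).mono fun _ h => pd_comp_smul h j

lemma comp_smul {c : ℝ} (hf : TwiceDiffAt f (c • x)) : TwiceDiffAt (fun y => f (c • y)) x :=
  ⟨(eventually_comp_smul hf.1).mono fun _ h => h.comp_smul, fun j =>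
    ((hf.2 j).comp_smul.const_mul c).congr_of_eventuallyEq (hf.pd_comp_smul_eventuallyEq j)⟩

end TwiceDiffAt

section SecondPartials

variable {n : ℕ} {f g : (Fin n → ℝ) → ℝ} {x : Fin n → ℝ}

lemma pd_pd_add (hf : TwiceDiffAt f x) (hg : TwiceDiffAt g x) (i j : Fin n) :
    pd i (pd j (fun y => f y + g y)) x = pd i (pd j f) x + pd i (pd j g) x := by
  rw [pd_congr ((hf.1.and hg.1).mono fun _ h => pd_add h.1 h.2 j) i, pd_add (hf.2 j) (hg.2 j)]

lemma pd_pd_sub (hf : TwiceDiffAt f x) (hg : TwiceDiffAt g x) (i j : Fin n) :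
    pd i (pd j (fun y => f y - g y)) x = pd i (pd j f) x - pd i (pd j g) x := by
  rw [pd_congr ((hf.1.and hg.1).mono fun _ h => pd_sub h.1 h.2 j) i, pd_sub (hf.2 j) (hg.2 j)]

lemma pd_pd_const_mul (hf : TwiceDiffAt f x) (c : ℝ) (i j : Fin n) :
    pd i (pd j (fun y => c * f y)) x = c * pd i (pd j f) x := by
  rw [pd_congr (hf.1.mono fun _ h => pd_const_mul h c j) i, pd_const_mul (hf.2 j)]

lemma pd_pd_sum {ι : Type*} (s : Finset ι) {F : ι → (Fin n → ℝ) → ℝ}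
    (hF : ∀ k ∈ s, TwiceDiffAt (F k) x) (i j : Fin n) :
    pd i (pd j (fun y => ∑ k ∈ s, F k y)) x = ∑ k ∈ s, pd i (pd j (F k)) x := by
  have hev : ∀ᶠ y in 𝓝 x, ∀ k ∈ s, DifferentiableAt ℝ (F k) y :=
    (eventually_all_finset s).2 fun k hk => (hF k hk).1
  rw [pd_congr (hev.mono fun _ h => pd_sum s h j) i, pd_sum s fun k hk => (hF k hk).2 j]

lemma pd_pd_mul (hf : TwiceDiffAt f x) (hg : TwiceDiffAt g x) (i j : Fin n) :
    pd i (pd j (fun y => f y * g y)) x =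
      pd i (pd j f) x * g x + pd j f x * pd i g x +
        (pd i f x * pd j g x + f x * pd i (pd j g) x) := by
  rw [pd_congr ((hf.1.and hg.1).mono fun _ h => pd_mul h.1 h.2 j) i,
    pd_add (f := fun y => pd j f y * g y) (g := fun y => f y * pd j g y)
      ((hf.2 j).mul hg.differentiableAt) (hf.differentiableAt.mul (hg.2 j)),
    pd_mul (hf.2 j) hg.differentiableAt, pd_mul hf.differentiableAt (hg.2 j)]

lemma pd_pd_comp_smul {c : ℝ} (hf : TwiceDiffAt f (c • x)) (i j : Fin n) :
    pd i (pd j (fun y => f (c • y))) x = c ^ 2 * pd i (pd j f) (c • x) := by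
  rw [pd_congr (hf.pd_comp_smul_eventuallyEq j) i,
    pd_const_mul ((hf.2 j).comp_smul) c, pd_comp_smul (hf.2 j)]
  ring

end SecondPartials

/-- `frobHess M w x` is the paper's `M:D²w(x)`. -/
noncomputable def frobHess {n : ℕ} (M : Fin n → Fin n → ℝ) (w : (Fin n → ℝ) → ℝ)
    (x : Fin n → ℝ) : ℝ :=
  ∑ i, ∑ j, M i j * pd i (pd j w) x

section FrobHess

variable {n : ℕ} {M : Fin n → Fin n → ℝ} {f g : (Fin n → ℝ) → ℝ} {x : Fin n → ℝ}

lemma frobHess_add (hf : TwiceDiffAt f x) (hg : TwiceDiffAt g x) :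
    frobHess M (fun y => f y + g y) x = frobHess M f x + frobHess M g x := by
  simp only [frobHess, pd_pd_add hf hg, mul_add, Finset.sum_add_distrib]

lemma frobHess_sub (hf : TwiceDiffAt f x) (hg : TwiceDiffAt g x) :
    frobHess M (fun y => f y - g y) x = frobHess M f x - frobHess M g x := by
  simp only [frobHess, pd_pd_sub hf hg, mul_sub, Finset.sum_sub_distrib]

lemma frobHess_const_mul (hf : TwiceDiffAt f x) (c : ℝ) :
    frobHess M (fun y => c * f y) x = c * frobHess M f x := by
  simp only [frobHess, pd_pd_const_mul hf, Finset.mul_sum, mul_left_comm]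

lemma frobHess_sum {ι : Type*} (s : Finset ι) {F : ι → (Fin n → ℝ) → ℝ}
    (hF : ∀ k ∈ s, TwiceDiffAt (F k) x) :
    frobHess M (fun y => ∑ k ∈ s, F k y) x = ∑ k ∈ s, frobHess M (F k) x := by
  simp only [frobHess, pd_pd_sum s hF, Finset.mul_sum]
  exact (Finset.sum_congr rfl fun _ _ => Finset.sum_comm).trans Finset.sum_comm

/-- The cross terms `∂_j v ∂_i g` and `∂_i v ∂_j g` coincide after contraction with the
symmetric `M`, hence the factor `2`. -/
lemma frobHess_mul_comp_smul (hM : ∀ i j, M i j = M j i) {v : (Fin n → ℝ) → ℝ} {c : ℝ}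
    (hv : TwiceDiffAt v (c • x)) (hg : TwiceDiffAt g x) :
    frobHess M (fun y => v (c • y) * g y) x =
      c ^ 2 * frobHess M v (c • x) * g x
        + 2 * c * ∑ i, ∑ j, M i j * pd i v (c • x) * pd j g x
        + ∑ i, ∑ j, M i j * v (c • x) * pd i (pd j g) x := by
  have hswap : ∑ i, ∑ j, M i j * (c * pd j v (c • x) * pd i g x)
      = ∑ i, ∑ j, M i j * (c * pd i v (c • x) * pd j g x) := by
    rw [Finset.sum_comm]
    exact Finset.sum_congr rfl fun i _ => Finset.sum_congr rfl fun j _ => by rw [hM]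
  simp only [frobHess, pd_pd_mul hv.comp_smul hg, pd_pd_comp_smul hv,
    pd_comp_smul hv.differentiableAt, mul_add, Finset.sum_add_distrib, hswap]
  simp only [Finset.mul_sum, Finset.sum_mul, ← Finset.sum_add_distrib]
  exact Finset.sum_congr rfl fun i _ => Finset.sum_congr rfl fun j _ => by ring

end FrobHess

lemma frobHess_sum_sum_mul_comp_smul {n : ℕ} {M : Fin n → Fin n → ℝ} {x : Fin n → ℝ}
    {ι κ : Type*} [Fintype ι] [Fintype κ] (hM : ∀ i j, M i j = M j i)
    {v g : ι → κ → (Fin n → ℝ) → ℝ} {c : ℝ}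
    (hv : ∀ k l, TwiceDiffAt (v k l) (c • x)) (hg : ∀ k l, TwiceDiffAt (g k l) x) :
    frobHess M (fun y => ∑ k, ∑ l, v k l (c • y) * g k l y) x =
      c ^ 2 * ∑ k, ∑ l, frobHess M (v k l) (c • x) * g k l x
        + 2 * c * ∑ i, ∑ j, ∑ k, ∑ l, M i j * pd i (v k l) (c • x) * pd j (g k l) x
        + ∑ i, ∑ j, ∑ k, ∑ l, M i j * v k l (c • x) * pd i (pd j (g k l)) x := by
  have hterm : ∀ k l, TwiceDiffAt (fun y => v k l (c • y) * g k l y) x := fun k l =>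
    (hv k l).comp_smul.mul (hg k l)
  have hswap : ∀ F : ι → κ → Fin n → Fin n → ℝ,
      ∑ k, ∑ l, ∑ i, ∑ j, F k l i j = ∑ i, ∑ j, ∑ k, ∑ l, F k l i j := fun _ =>
    Finset.sum_comm_cycle.trans (Finset.sum_congr rfl fun _ _ => Finset.sum_comm_cycle)
  calc frobHess M (fun y => ∑ k, ∑ l, v k l (c • y) * g k l y) x
      = ∑ k, ∑ l, frobHess M (fun y => v k l (c • y) * g k l y) x := by
        rw [frobHess_sum _ fun k _ => TwiceDiffAt.sum _ fun l _ => hterm k l]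
        exact Finset.sum_congr rfl fun k _ => frobHess_sum _ fun l _ => hterm k l
    _ = ∑ k, ∑ l, (c ^ 2 * frobHess M (v k l) (c • x) * g k l x
          + 2 * c * ∑ i, ∑ j, M i j * pd i (v k l) (c • x) * pd j (g k l) x
          + ∑ i, ∑ j, M i j * v k l (c • x) * pd i (pd j (g k l)) x) :=
        Finset.sum_congr rfl fun k _ => Finset.sum_congr rfl fun l _ =>
          frobHess_mul_comp_smul hM (hv k l) (hg k l)
    _ = _ := by
        simp only [Finset.sum_add_distrib, mul_assoc (c ^ 2), ← Finset.mul_sum, hswap]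

theorem corrected_equation_second_order_general {n : ℕ}
    (Ω : Set (Fin n → ℝ)) (hΩ : IsOpen Ω)
    (ε : ℝ) (hε : 0 < ε)
    (A : (Fin n → ℝ) → Fin n → Fin n → ℝ)
    (hAsymm : ∀ y i j, A y i j = A y j i)
    (Abar : Fin n → Fin n → ℝ)
    (f : (Fin n → ℝ) → ℝ)
    (uε u θε wε : (Fin n → ℝ) → ℝ)
    (huε : TwiceDiffOn uε Ω)
    (huεeq : ∀ x ∈ Ω, -(∑ i, ∑ j, A (ε⁻¹ • x) i j * pd i (pd j uε) x) = f x)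
    (hu : ContDiffOn ℝ 4 u Ω)
    (hueq : ∀ x ∈ Ω, -(∑ i, ∑ j, Abar i j * pd i (pd j u) x) = f x)
    (v : Fin n → Fin n → (Fin n → ℝ) → ℝ)
    (hv : ∀ k l, ContDiff ℝ 2 (v k l))
    (hveq : ∀ k l, ∀ y : Fin n → ℝ,
      -(∑ i, ∑ j, A y i j * pd i (pd j (v k l)) y) = A y k l - Abar k l)
    (hθ : TwiceDiffOn θε Ω)
    (hθeq : ∀ x ∈ Ω, (∑ i, ∑ j, A (ε⁻¹ • x) i j * pd i (pd j θε) x) = 0)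
    (hw : TwiceDiffOn wε Ω)
    (hweq : ∀ x ∈ Ω,
      -(∑ i, ∑ j, A (ε⁻¹ • x) i j * pd i (pd j wε) x)
        = ∑ i, ∑ j, ∑ k, ∑ l,
            A (ε⁻¹ • x) i j * pd i (v k l) (ε⁻¹ • x) * pd j (pd k (pd l u)) x) :
    ∀ x ∈ Ω,
      -(∑ i, ∑ j, A (ε⁻¹ • x) i j *
          pd i (pd j (fun y => uε y - u y -
            ε ^ 2 * ((∑ k, ∑ l, v k l (ε⁻¹ • y) * pd k (pd l u) y) + θε y)
            - 2 * ε * wε y)) x)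
        = ε ^ 2 * ∑ i, ∑ j, ∑ k, ∑ l, A (ε⁻¹ • x) i j *
            v k l (ε⁻¹ • x) * pd i (pd j (pd k (pd l u))) x := by
  intro x hx
  have hu4 : ContDiffAt ℝ 4 u x := hu.contDiffAt (hΩ.mem_nhds hx)
  have hD2u : ∀ k l, TwiceDiffAt (pd k (pd l u)) x := fun k l =>
    (contDiffAt_pd le_rfl (contDiffAt_pd (by norm_num) hu4 l) k).twiceDiffAt
  have hvx : ∀ k l, TwiceDiffAt (v k l) (ε⁻¹ • x) := fun k l =>
    (hv k l).contDiffAt.twiceDiffAt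
  have hcorr : TwiceDiffAt (fun y => ∑ k, ∑ l, v k l (ε⁻¹ • y) * pd k (pd l u) y) x :=
    .sum _ fun k _ => .sum _ fun l _ => (hvx k l).comp_smul.mul (hD2u k l)
  have huεx := huε.twiceDiffAt hΩ hx
  have hux : TwiceDiffAt u x := (hu4.of_le (by norm_num)).twiceDiffAt
  have hθx := hθ.twiceDiffAt hΩ hx
  have hwx := hw.twiceDiffAt hΩ hx
  have hcell : ∀ k l, frobHess (A (ε⁻¹ • x)) (v k l) (ε⁻¹ • x) = Abar k l - A (ε⁻¹ • x) k l :=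
    fun k l => by unfold frobHess; linarith [hveq k l (ε⁻¹ • x)]
  change -frobHess (A (ε⁻¹ • x)) _ x = _
  rw [frobHess_sub ((huεx.sub hux).sub ((hcorr.add hθx).const_mul _)) (hwx.const_mul _),
    frobHess_sub (huεx.sub hux) ((hcorr.add hθx).const_mul _), frobHess_sub huεx hux,
    frobHess_const_mul (hcorr.add hθx), frobHess_add hcorr hθx, frobHess_const_mul hwx,
    frobHess_sum_sum_mul_comp_smul (hAsymm _) hvx hD2u]
  simp only [hcell, sub_mul, Finset.sum_sub_distrib]
  unfold frobHess
  rw [neg_eq_iff_eq_neg.mp (huεeq x hx), neg_eq_iff_eq_neg.mp (hueq x hx), hθeq x hx,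
    neg_eq_iff_eq_neg.mp (hweq x hx)]
  field_simp
  ring

/-- The identity `−A(x/ε):D²(uᵋ − u − φᵋ − 2εwᵋ) = ε² ∑ a_{ij}(x/ε) v^{kl}(x/ε) ∂⁴_{ijkl}u`
on `Ω`, where `φᵋ = ε²(∑ v^{kl}(·/ε) ∂²_{kl}u + θᵋ)`. -/
theorem corrected_equation_second_order {n : ℕ} (hn : 1 ≤ n)
    (Ω : Set (Fin n → ℝ)) (hΩ : IsOpen Ω)
    (ε : ℝ) (hε : 0 < ε)
    (A : (Fin n → ℝ) → Fin n → Fin n → ℝ)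
    (hAsymm : ∀ y i j, A y i j = A y j i)
    (Abar : Fin n → Fin n → ℝ) (hAbarSymm : ∀ i j, Abar i j = Abar j i)
    (f : (Fin n → ℝ) → ℝ)
    (uε u θε wε : (Fin n → ℝ) → ℝ)
    (huε : TwiceDiffOn uε Ω)
    (huεeq : ∀ x ∈ Ω, -(∑ i, ∑ j, A (ε⁻¹ • x) i j * pd i (pd j uε) x) = f x)
    (hu : ContDiffOn ℝ 4 u Ω)
    (hueq : ∀ x ∈ Ω, -(∑ i, ∑ j, Abar i j * pd i (pd j u) x) = f x)
    (v : Fin n → Fin n → (Fin n → ℝ) → ℝ)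
    (hv : ∀ k l, ContDiff ℝ 2 (v k l))
    (hveq : ∀ k l, ∀ y : Fin n → ℝ,
      -(∑ i, ∑ j, A y i j * pd i (pd j (v k l)) y) = A y k l - Abar k l)
    (hθ : TwiceDiffOn θε Ω)
    (hθeq : ∀ x ∈ Ω, (∑ i, ∑ j, A (ε⁻¹ • x) i j * pd i (pd j θε) x) = 0)
    (hw : TwiceDiffOn wε Ω)
    (hweq : ∀ x ∈ Ω,
      -(∑ i, ∑ j, A (ε⁻¹ • x) i j * pd i (pd j wε) x)
        = ∑ i, ∑ j, ∑ k, ∑ l,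
            A (ε⁻¹ • x) i j * pd i (v k l) (ε⁻¹ • x) * pd j (pd k (pd l u)) x) :
    ∀ x ∈ Ω,
      -(∑ i, ∑ j, A (ε⁻¹ • x) i j *
          pd i (pd j (fun y => uε y - u y -
            ε ^ 2 * ((∑ k, ∑ l, v k l (ε⁻¹ • y) * pd k (pd l u) y) + θε y)
            - 2 * ε * wε y)) x)
        = ε ^ 2 * ∑ i, ∑ j, ∑ k, ∑ l, A (ε⁻¹ • x) i j *
            v k l (ε⁻¹ • x) * pd i (pd j (pd k (pd l u))) x :=
  corrected_equation_second_order_general Ω hΩ ε hε A hAsymm Abar f uε u θε wε huε huεeq hu hueq v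
    hv hveq hθ hθeq hw hweq
end
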